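/- Let 𝔐 be a class of preference models such that for every M ∈ 𝔐 and every world w of M there is a characteristic formula ξ_w ∈ L_≤ with M,w' ⊨ ξ_w iff w' = w, and let ★ be a dynamic operator closed over 𝔐. Then ★ is 𝔐-DP1-compliant if and only if for every M ∈ 𝔐, every propositional formula φ ∈ L_0, and all worlds w, w' ∈ ⟦φ⟧_M: w ≤ w' iff w ≤_{★φ} w'. -/

import Mathlib

inductive PForm (P : Type) : Type
  | atom : P → PForm P
  | neg  : PForm P → PForm P
  | and  : PForm P → PForm P → PForm P

inductive DForm (P : Type) : Type
  | atom  : P → DForm P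
  | neg   : DForm P → DForm P
  | and   : DForm P → DForm P → DForm P
  | all   : DForm P → DForm P
  | boxLe : DForm P → DForm P
  | boxLt : DForm P → DForm P
  | dyn   : PForm P → DForm P → DForm P

structure PrefModel (P : Type) where
  W : Type
  le : W → W → Prop
  refl : ∀ w, le w w
  trans : ∀ w₁ w₂ w₃, le w₁ w₂ → le w₂ w₃ → le w₁ w₃
  wf : WellFounded (fun w w' => le w w' ∧ ¬ le w' w)
  val : P → Set W

namespace PrefModel
variable {P : Type}
def lt (M : PrefModel P) (w w' : M.W) : Prop := M.le w w' ∧ ¬ M.le w' w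
def Min (M : PrefModel P) (S : Set M.W) : Set M.W :=
  {w | w ∈ S ∧ ¬ ∃ w' ∈ S, M.le w' w ∧ ¬ M.le w w'}
end PrefModel

def psat {P : Type} (M : PrefModel P) : PForm P → M.W → Prop
  | .atom p, w => w ∈ M.val p
  | .neg φ, w => ¬ psat M φ w
  | .and φ ψ, w => psat M φ w ∧ psat M ψ w

def pext {P : Type} (M : PrefModel P) (φ : PForm P) : Set M.W := {w | psat M φ w}

structure DynOp (P : Type) where
  rel : (M : PrefModel P) → PForm P → M.W → M.W → Prop
  refl : ∀ M φ w, rel M φ w w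
  trans : ∀ M φ w₁ w₂ w₃, rel M φ w₁ w₂ → rel M φ w₂ w₃ → rel M φ w₁ w₃
  wf : ∀ M φ, WellFounded (fun w w' => rel M φ w w' ∧ ¬ rel M φ w' w)

def DynOp.apply {P : Type} (s : DynOp P) (M : PrefModel P) (φ : PForm P) : PrefModel P where
  W := M.W
  le := s.rel M φ
  refl := s.refl M φ
  trans := s.trans M φ
  wf := s.wf M φ
  val := M.val

def DynOp.srel {P : Type} (s : DynOp P) (M : PrefModel P) (φ : PForm P) (w w' : M.W) : Prop :=
  s.rel M φ w w' ∧ ¬ s.rel M φ w' w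

def PForm.toD {P : Type} : PForm P → DForm P
  | .atom p => .atom p
  | .neg φ => .neg φ.toD
  | .and φ ψ => .and φ.toD ψ.toD

namespace DForm
variable {P : Type}
def imp (ξ ψ : DForm P) : DForm P := .neg (.and ξ (.neg ψ))
def iff (ξ ψ : DForm P) : DForm P := .and (imp ξ ψ) (imp ψ ξ)
def or (ξ ψ : DForm P) : DForm P := .neg (.and (.neg ξ) (.neg ψ))
def exi (ξ : DForm P) : DForm P := .neg (.all (.neg ξ))
def diaLt (ξ : DForm P) : DForm P := .neg (.boxLt (.neg ξ))
def mu (ξ : DForm P) : DForm P := .and ξ (.neg (diaLt ξ))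
def bel (ψ χ : DForm P) : DForm P := .all (imp (mu χ) ψ)
end DForm

def dsat {P : Type} (s : DynOp P) : DForm P → (M : PrefModel P) → M.W → Prop
  | .atom p, M, w => w ∈ M.val p
  | .neg ξ, M, w => ¬ dsat s ξ M w
  | .and ξ₁ ξ₂, M, w => dsat s ξ₁ M w ∧ dsat s ξ₂ M w
  | .all ξ, M, _ => ∀ w', dsat s ξ M w'
  | .boxLe ξ, M, w => ∀ w', M.le w' w → dsat s ξ M w'
  | .boxLt ξ, M, w => ∀ w', M.lt w' w → dsat s ξ M w'
  | .dyn φ ξ, M, w => dsat s ξ (s.apply M φ) w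

def ClosedOver {P : Type} (s : DynOp P) (𝔐 : Set (PrefModel P)) : Prop :=
  ∀ M ∈ 𝔐, ∀ φ : PForm P, s.apply M φ ∈ 𝔐

inductive Form (P : Type) : Type
  | atom : P → Form P
  | neg : Form P → Form P
  | and : Form P → Form P → Form P
  | all : Form P → Form P
  | boxLe : Form P → Form P
  | boxLt : Form P → Form P

def sat {P : Type} (M : PrefModel P) : Form P → M.W → Prop
  | .atom p, w => w ∈ M.val p
  | .neg φ, w => ¬ sat M φ w
  | .and φ ψ, w => sat M φ w ∧ sat M ψ w
  | .all φ, _ => ∀ w', sat M φ w'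
  | .boxLe φ, w => ∀ w', M.le w' w → sat M φ w'
  | .boxLt φ, w => ∀ w', M.lt w' w → sat M φ w'

/-- `★` is `𝔐`-DP1-compliant. -/
def DP1Compliant {P : Type} (s : DynOp P) (𝔐 : Set (PrefModel P)) : Prop :=
  ∀ M ∈ 𝔐, ∀ (φ : PForm P) (w w' : M.W), psat M φ w → psat M φ w' →
    -- (DP1a), non-strict and strict versions
    ((s.rel M φ w w' → ∀ ξ : DForm P, dsat s (.dyn φ ξ) M w →
        ∃ w'' : M.W, psat M φ w'' ∧ dsat s (.dyn φ ξ) M w'' ∧ M.le w'' w') ∧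
     (s.srel M φ w w' → ∀ ξ : DForm P, dsat s (.dyn φ ξ) M w →
        ∃ w'' : M.W, psat M φ w'' ∧ dsat s (.dyn φ ξ) M w'' ∧ M.lt w'' w') ∧
    -- (DP1b), non-strict and strict versions
     (M.le w w' → ∀ ξ : DForm P, dsat s (.dyn φ ξ) M w →
        ∃ w'' : M.W, psat M φ w'' ∧ dsat s (.dyn φ ξ) M w'' ∧ s.rel M φ w'' w') ∧
     (M.lt w w' → ∀ ξ : DForm P, dsat s (.dyn φ ξ) M w →
        ∃ w'' : M.W, psat M φ w'' ∧ dsat s (.dyn φ ξ) M w'' ∧ s.srel M φ w'' w'))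

/-
If `★` agrees with `≤` on `⟦φ⟧`, the world `w` itself witnesses every clause of DP1.
Conversely, `★(M, φ)` lies in `𝔐`, so `w` has a characteristic formula `ξ_w` there; then
`[★φ]ξ_w` holds at `w` and at no other world, so the only possible DP1 witness is `w` itself,
which turns DP1a and DP1b into the two inclusions between `≤` and `≤_{★φ}`.
-/

def Form.toD {P : Type} : Form P → DForm P
  | .atom p => .atom p
  | .neg φ => .neg φ.toD
  | .and φ ψ => .and φ.toD ψ.toD
  | .all φ => .all φ.toD
  | .boxLe φ => .boxLe φ.toD
  | .boxLt φ => .boxLt φ.toD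

section
variable {P : Type} {s : DynOp P} {𝔐 : Set (PrefModel P)}

@[simp]
theorem dsat_toD (ψ : Form P) (M : PrefModel P) (w : M.W) :
    dsat s ψ.toD M w ↔ sat M ψ w := by
  induction ψ generalizing w <;> simp_all [Form.toD, dsat, sat]

theorem dp1Compliant_of_le_iff_rel
    (h : ∀ M ∈ 𝔐, ∀ (φ : PForm P) (w w' : M.W), psat M φ w → psat M φ w' →
      (M.le w w' ↔ s.rel M φ w w')) :
    DP1Compliant s 𝔐 := by
  intro M hM φ w w' hw hw'
  have hle := h M hM φ w w' hw hw'
  have hge := h M hM φ w' w hw' hw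
  refine ⟨fun hrel _ hξ => ⟨w, hw, hξ, hle.mpr hrel⟩, fun hsrel _ hξ => ⟨w, hw, hξ, ?_⟩,
    fun hle' _ hξ => ⟨w, hw, hξ, hle.mp hle'⟩, fun hlt _ hξ => ⟨w, hw, hξ, ?_⟩⟩
  · exact ⟨hle.mpr hsrel.1, mt hge.mp hsrel.2⟩
  · exact ⟨hle.mp hlt.1, mt hge.mpr hlt.2⟩

theorem DP1Compliant.le_iff_rel (h : DP1Compliant s 𝔐) {M : PrefModel P} (hM : M ∈ 𝔐)
    {φ : PForm P} {w w' : M.W} (hw : psat M φ w) (hw' : psat M φ w') {ξ : Form P}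
    (hξ : ∀ v, sat (s.apply M φ) ξ v ↔ v = w) :
    M.le w w' ↔ s.rel M φ w w' := by
  have hdyn : ∀ v, dsat s (.dyn φ ξ.toD) M v ↔ v = w := fun v => (dsat_toD ξ (s.apply M φ) v).trans (hξ v)
  obtain ⟨hDP1a, -, hDP1b, -⟩ := h M hM φ w w' hw hw'
  constructor
  · intro hle
    obtain ⟨v, -, hv, hrel⟩ := hDP1b hle ξ.toD ((hdyn w).mpr rfl)
    exact (hdyn v).mp hv ▸ hrel
  · intro hrel
    obtain ⟨v, -, hv, hle⟩ := hDP1a hrel ξ.toD ((hdyn w).mpr rfl)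
    exact (hdyn v).mp hv ▸ hle

end

theorem dp1_compliance_on_models_with_characteristic_formulas {P : Type}
    (𝔐 : Set (PrefModel P)) (s : DynOp P) (hclosed : ClosedOver s 𝔐)
    (hchar : ∀ M ∈ 𝔐, ∀ w : M.W, ∃ ξ : Form P, ∀ w' : M.W, sat M ξ w' ↔ w' = w) :
    DP1Compliant s 𝔐 ↔
      ∀ M ∈ 𝔐, ∀ (φ : PForm P) (w w' : M.W), psat M φ w → psat M φ w' →
        (M.le w w' ↔ s.rel M φ w w') := by
  refine ⟨fun h M hM φ w w' hw hw' => ?_, dp1Compliant_of_le_iff_rel⟩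
  obtain ⟨ξ, hξ⟩ := hchar (s.apply M φ) (hclosed M hM φ) w
  exact h.le_iff_rel hM hw hw' hξ
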